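/- Let k1, k2, k3 > 0 and K = diag(k1,k2,k3), and set h1 = min{k1+k2, k1+k3, k2+k3}. Let x ∈ ℝ³ with x ≠ 0, θ = ‖x‖, u = x/θ, and G = I₃ + sin(θ)·û + (1 − cos(θ))·û². Let G₃₃ denote the (3,3) entry of G and define Ψ = (1/2)·tr(K(I₃ − G)). Then 1 − G₃₃² ≤ (4/h1)·Ψ. -/

import Mathlib

/-! With `a = 1 - cos θ ∈ [0, 2]` and `s = u₁² + u₂²`, the identity `û² = u uᵀ - ‖u‖² I` gives
`G₃₃ = 1 - a s` and `Ψ = (a/2) Σᵢ (Σ_{j ≠ i} k_j) uᵢ² ≥ (a/2) h1 ‖u‖²`. Hence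
`1 - G₃₃² = a s (2 - a s) ≤ 2 a s ≤ 2 a ‖u‖² ≤ (4/h1) Ψ`. -/

open Matrix

noncomputable section

/-- Euclidean norm on ℝ³. -/
def euclNorm (x : Fin 3 → ℝ) : ℝ := Real.sqrt (∑ i, x i ^ 2)

/-- The hat map: sends `x ∈ ℝ³` to the skew-symmetric matrix `x̂`. -/
def hat (x : Fin 3 → ℝ) : Matrix (Fin 3) (Fin 3) ℝ :=
  !![0, -x 2, x 1; x 2, 0, -x 0; -x 1, x 0, 0]

theorem hat_mul_hat (u : Fin 3 → ℝ) :
    hat u * hat u = vecMulVec u u - (∑ j, u j ^ 2) • 1 := by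
  ext i j
  fin_cases i <;> fin_cases j <;>
    simp [hat, Matrix.mul_apply, vecMulVec_apply, Fin.sum_univ_three] <;> ring

theorem hat_apply_self (u : Fin 3 → ℝ) (i : Fin 3) : hat u i i = 0 := by
  fin_cases i <;> simp [hat]

def rodrigues (θ : ℝ) (u : Fin 3 → ℝ) : Matrix (Fin 3) (Fin 3) ℝ :=
  1 + Real.sin θ • hat u + (1 - Real.cos θ) • (hat u * hat u)

theorem rodrigues_apply_self (θ : ℝ) (u : Fin 3 → ℝ) (i : Fin 3) :
    rodrigues θ u i i = 1 - (1 - Real.cos θ) * (∑ j, u j ^ 2 - u i ^ 2) := by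
  simp only [rodrigues, hat_mul_hat, Matrix.add_apply, Matrix.smul_apply, Matrix.sub_apply,
    one_apply_eq, hat_apply_self, vecMulVec_apply, smul_eq_mul]
  ring

theorem trace_diagonal_mul {n : Type*} [Fintype n] [DecidableEq n]
    (k : n → ℝ) (A : Matrix n n ℝ) : (diagonal k * A).trace = ∑ i, k i * A i i := by
  simp [Matrix.trace, diagonal_mul]

theorem trace_diagonal_mul_one_sub_rodrigues (k : Fin 3 → ℝ) (θ : ℝ) (u : Fin 3 → ℝ) :
    (diagonal k * (1 - rodrigues θ u)).trace
      = (1 - Real.cos θ) * ∑ i, k i * (∑ j, u j ^ 2 - u i ^ 2) := by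
  rw [trace_diagonal_mul, Finset.mul_sum]
  refine Finset.sum_congr rfl fun i _ => ?_
  rw [Matrix.sub_apply, one_apply_eq, rodrigues_apply_self]
  ring

/-- Each `u i ^ 2` is weighted by the sum of the two `k j` with `j ≠ i`. -/
theorem min_pair_sum_mul_sum_sq_le (k u : Fin 3 → ℝ) :
    min (k 0 + k 1) (min (k 0 + k 2) (k 1 + k 2)) * ∑ j, u j ^ 2
      ≤ ∑ i, k i * (∑ j, u j ^ 2 - u i ^ 2) := by
  have h01 := min_le_left (k 0 + k 1) (min (k 0 + k 2) (k 1 + k 2))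
  have h02 := (min_le_right (k 0 + k 1) _).trans (min_le_left (k 0 + k 2) (k 1 + k 2))
  have h12 := (min_le_right (k 0 + k 1) _).trans (min_le_right (k 0 + k 2) (k 1 + k 2))
  simp only [Fin.sum_univ_three]
  nlinarith [mul_le_mul_of_nonneg_right h01 (sq_nonneg (u 2)),
    mul_le_mul_of_nonneg_right h02 (sq_nonneg (u 1)),
    mul_le_mul_of_nonneg_right h12 (sq_nonneg (u 0))]

theorem stmt9_general (k1 k2 k3 : ℝ)
    (hk1 : 0 < k1) (hk2 : 0 < k2) (hk3 : 0 < k3)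
    (K : Matrix (Fin 3) (Fin 3) ℝ) (hK : K = Matrix.diagonal ![k1, k2, k3])
    (h1 : ℝ) (hh1 : h1 = min (k1 + k2) (min (k1 + k3) (k2 + k3)))
    (θ : ℝ)
    (u : Fin 3 → ℝ)
    (G : Matrix (Fin 3) (Fin 3) ℝ)
    (hG : G = 1 + Real.sin θ • hat u + (1 - Real.cos θ) • (hat u * hat u))
    (Ψ : ℝ) (hΨ : Ψ = (1 / 2) * (K * (1 - G)).trace) :
    1 - (G 2 2) ^ 2 ≤ (4 / h1) * Ψ := by
  change G = rodrigues θ u at hG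
  set a := 1 - Real.cos θ
  set s := u 0 ^ 2 + u 1 ^ 2
  set Q := ∑ i, ![k1, k2, k3] i * (∑ j, u j ^ 2 - u i ^ 2)
  have ha : 0 ≤ a := sub_nonneg.mpr (Real.cos_le_one θ)
  have hh1_pos : 0 < h1 := by
    rw [hh1]; exact lt_min (by linarith) (lt_min (by linarith) (by linarith))
  have hs_le : s ≤ ∑ j, u j ^ 2 := by
    simp only [s, Fin.sum_univ_three]; linarith [sq_nonneg (u 2)]
  have hG22 : G 2 2 = 1 - a * s := by
    rw [hG, rodrigues_apply_self, Fin.sum_univ_three]; ring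
  have hΨQ : Ψ = 1 / 2 * (a * Q) := by
    rw [hΨ, hK, hG, trace_diagonal_mul_one_sub_rodrigues]
  have hQ : h1 * ∑ j, u j ^ 2 ≤ Q := hh1 ▸ min_pair_sum_mul_sum_sq_le ![k1, k2, k3] u
  rw [hG22, hΨQ]
  calc 1 - (1 - a * s) ^ 2 ≤ 2 * a * s := by nlinarith [sq_nonneg (a * s)]
    _ ≤ 2 * a * ∑ j, u j ^ 2 := by gcongr
    _ ≤ 2 * a * (Q / h1) := by gcongr; rwa [le_div_iff₀' hh1_pos]
    _ = 4 / h1 * (1 / 2 * (a * Q)) := by field_simp; ring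

theorem stmt9 (k1 k2 k3 : ℝ)
    (hk1 : 0 < k1) (hk2 : 0 < k2) (hk3 : 0 < k3)
    (K : Matrix (Fin 3) (Fin 3) ℝ) (hK : K = Matrix.diagonal ![k1, k2, k3])
    (h1 : ℝ) (hh1 : h1 = min (k1 + k2) (min (k1 + k3) (k2 + k3)))
    (x : Fin 3 → ℝ) (hx : x ≠ 0)
    (θ : ℝ) (hθ : θ = euclNorm x)
    (u : Fin 3 → ℝ) (hu : u = θ⁻¹ • x)
    (G : Matrix (Fin 3) (Fin 3) ℝ)
    (hG : G = 1 + Real.sin θ • hat u + (1 - Real.cos θ) • (hat u * hat u))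
    (Ψ : ℝ) (hΨ : Ψ = (1 / 2) * (K * (1 - G)).trace) :
    1 - (G 2 2) ^ 2 ≤ (4 / h1) * Ψ :=
  stmt9_general k1 k2 k3 hk1 hk2 hk3 K hK h1 hh1 θ u G hG Ψ hΨ
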